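/- Let R be a finite commutative Frobenius ring. Any m × l full-row-rank matrix A over R can be extended, by appending l − m rows, to an invertible l × l matrix à = (A over A'). Equivalently, any linearly independent family of m vectors in R^l extends to a basis of R^l. -/

import Mathlib

open Matrix BigOperators

variable {R : Type*}

def FRR [CommRing R] {m l : ℕ} (A : Matrix (Fin m) (Fin l) R) : Prop :=
  ∀ b : Fin m → R, Matrix.vecMul b A = 0 → b = 0

def perpCode [CommRing R] {N : ℕ} (C : Submodule R (Fin N → R)) : Submodule R (Fin N → R) where
  carrier := {x | ∀ c ∈ C, x ⬝ᵥ c = 0}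
  add_mem' := by
    intro a b ha hb c hc
    simp [add_dotProduct, ha c hc, hb c hc]
  zero_mem' := by
    intro c hc
    simp
  smul_mem' := by
    intro r x hx c hc
    simp [smul_dotProduct, hx c hc]

def IsFrobenius (R : Type*) [CommRing R] : Prop :=
  ∀ (N : ℕ) (C : Submodule R (Fin N → R)), perpCode (perpCode C) = C

def wtv [Zero R] [DecidableEq R] {n : ℕ} (v : Fin n → R) : ℕ :=
  (Finset.univ.filter fun i => v i ≠ 0).card

open scoped Classical in
noncomputable def minDistW [CommRing R] (w : R → ℕ) {n : ℕ} (C : Set (Fin n → R)) : ℕ :=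
  if ∃ x ∈ C, ∃ y ∈ C, x ≠ y then
    sInf {d | ∃ x ∈ C, ∃ y ∈ C, x ≠ y ∧ (∑ i, w (x i - y i)) = d}
  else n + 1

noncomputable def dHv [CommRing R] [DecidableEq R] {n : ℕ} (C : Set (Fin n → R)) : ℕ :=
  minDistW (fun r => if r = 0 then 0 else 1) C

open scoped Classical in
noncomputable def minDistWM [CommRing R] (w : R → ℕ) {n l : ℕ}
    (C : Set (Matrix (Fin n) (Fin l) R)) : ℕ :=
  if ∃ x ∈ C, ∃ y ∈ C, x ≠ y then
    sInf {d | ∃ x ∈ C, ∃ y ∈ C, x ≠ y ∧ (∑ i, ∑ j, w (x i j - y i j)) = d}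
  else n * l + 1

noncomputable def dHM [CommRing R] [DecidableEq R] {n l : ℕ} (C : Set (Matrix (Fin n) (Fin l) R)) : ℕ :=
  minDistWM (fun r => if r = 0 then 0 else 1) C

def MPC [CommRing R] {n m l : ℕ} (C : Fin m → Set (Fin n → R)) (A : Matrix (Fin m) (Fin l) R) :
    Set (Matrix (Fin n) (Fin l) R) :=
  {x | ∃ c : Fin m → Fin n → R, (∀ j, c j ∈ C j) ∧ x = Matrix.of fun i k => ∑ j, c j i * A j k}

def dualM [CommRing R] {n l : ℕ} (C : Set (Matrix (Fin n) (Fin l) R)) : Set (Matrix (Fin n) (Fin l) R) :=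
  {x | ∀ c ∈ C, ∑ i, ∑ j, x i j * c i j = 0}

def dualV [CommRing R] {n : ℕ} (C : Set (Fin n → R)) : Set (Fin n → R) :=
  {x | ∀ c ∈ C, x ⬝ᵥ c = 0}



section FrobeniusAux
open Finset

open scoped Classical in
lemma count_fiber_split {P S : Type*} [PartialOrder P] [Fintype P] [Fintype S]
    (a : S → P) (p : P) :
    Nat.card {s // p ≤ a s} =
      Nat.card {s // a s = p} +
        ∑ q ∈ univ.filter fun q => p < q, Nat.card {s // a s = q} := by
  classical
  simp only [Nat.card_eq_fintype_card, Fintype.card_subtype]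
  have hsplit : (univ.filter fun s => p ≤ a s)
      = (univ.filter fun s => a s = p) ∪ (univ.filter fun s => p < a s) := by
    ext s
    simp only [mem_filter, mem_union, mem_univ, true_and]
    constructor
    · intro h
      rcases lt_or_eq_of_le h with h' | h'
      · exact Or.inr h'
      · exact Or.inl h'.symm
    · rintro (h | h)
      · exact le_of_eq h.symm
      · exact le_of_lt h
  rw [hsplit, Finset.card_union_of_disjoint]
  · congr 1
    rw [Finset.card_eq_sum_card_fiberwise (f := a) (t := univ.filter fun q => p < q)
      (fun s hs => by simp_all)]
    refine Finset.sum_congr rfl fun q hq => ?_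
    simp only [mem_filter, mem_univ, true_and] at hq
    congr 1
    ext s
    simp only [mem_filter, mem_univ, true_and]
    constructor
    · exact fun h => h.2
    · intro h; exact ⟨h ▸ hq, h⟩
  · rw [Finset.disjoint_left]
    intro s hs hs'
    simp only [mem_filter, mem_univ, true_and] at hs hs'
    exact absurd (hs ▸ hs') (lt_irrefl p)

lemma mobius_count {P S T : Type*} [PartialOrder P] [Finite P] [Finite S] [Finite T]
    (a : S → P) (b : T → P)
    (h : ∀ p : P, Nat.card {s // p ≤ a s} = Nat.card {t // p ≤ b t}) :
    ∀ p : P, Nat.card {s // a s = p} = Nat.card {t // b t = p} := by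
  classical
  cases nonempty_fintype P
  cases nonempty_fintype S
  cases nonempty_fintype T
  have wfgt : WellFoundedGT P := inferInstance
  intro p
  induction p using WellFounded.induction (hwf := wfgt.wf) with
  | _ p IH =>
    have Ha := count_fiber_split a p
    have Hb := count_fiber_split b p
    have hsum : ∑ q ∈ univ.filter fun q => p < q, Nat.card {s // a s = q}
        = ∑ q ∈ univ.filter fun q => p < q, Nat.card {t // b t = q} := by
      refine Finset.sum_congr rfl fun q hq => ?_
      simp only [mem_filter, mem_univ, true_and] at hq
      exact IH q hq
    have hp := h p
    omega

end FrobeniusAux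

section FrobeniusAux2
variable [CommRing R]

lemma mem_perpCode {N : ℕ} {C : Submodule R (Fin N → R)} {x : Fin N → R} :
    x ∈ perpCode C ↔ ∀ c ∈ C, x ⬝ᵥ c = 0 := Iff.rfl

lemma perpCode_bot {N : ℕ} : perpCode (⊥ : Submodule R (Fin N → R)) = ⊤ := by
  ext x
  simp only [mem_perpCode, Submodule.mem_bot, Submodule.mem_top, iff_true]
  rintro c rfl
  simp

lemma exists_right_inverse_fin [Fintype R] (hFrob : IsFrobenius R) {m l : ℕ}
    (A : Matrix (Fin m) (Fin l) R) (hA : FRR A) :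
    ∃ B : Matrix (Fin l) (Fin m) R, A * B = 1 := by
  have h1 : perpCode (LinearMap.range A.mulVecLin) = ⊥ := by
    rw [Submodule.eq_bot_iff]
    intro b hb
    apply hA
    funext j
    have hx := hb (A.mulVec (Pi.single j 1)) ⟨Pi.single j 1, rfl⟩
    rw [Matrix.dotProduct_mulVec] at hx
    simpa using hx
  have hrange : LinearMap.range A.mulVecLin = ⊤ := by
    conv_lhs => rw [← hFrob m (LinearMap.range A.mulVecLin), h1, perpCode_bot]
  have hex : ∀ i : Fin m, ∃ x : Fin l → R, A.mulVec x = Pi.single i 1 := by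
    intro i
    have : Pi.single i (1:R) ∈ LinearMap.range A.mulVecLin := hrange ▸ Submodule.mem_top
    obtain ⟨x, hx⟩ := this
    exact ⟨x, hx⟩
  choose x hx using hex
  refine ⟨Matrix.of fun j i => x i j, ?_⟩
  ext i i'
  have : (A.mulVec (x i')) i = (Pi.single i' 1 : Fin m → R) i := by rw [hx i']
  simp only [Matrix.mulVec, dotProduct] at this
  rw [Matrix.mul_apply]
  simp only [Matrix.of_apply]
  rw [this, Matrix.one_apply, Pi.single_apply]

lemma exists_right_inverse [Fintype R] (hFrob : IsFrobenius R) {l : ℕ} {ι : Type*}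
    [Fintype ι] [DecidableEq ι]
    (A : Matrix ι (Fin l) R) (hA : ∀ b : ι → R, vecMul b A = 0 → b = 0) :
    ∃ B : Matrix (Fin l) ι R, A * B = 1 := by
  let e := Fintype.equivFin ι
  let A' : Matrix (Fin (Fintype.card ι)) (Fin l) R := A.submatrix e.symm id
  have hA' : FRR A' := by
    intro b hb
    have h2 : vecMul (fun i => b (e i)) A = 0 := by
      funext j
      have := congrFun hb j
      simp only [Matrix.vecMul, dotProduct, Pi.zero_apply] at this ⊢
      rw [← this]
      exact Fintype.sum_equiv e _ _ (fun i => by simp [A'])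
    have := hA _ h2
    funext i'
    have := congrFun this (e.symm i')
    simpa using this
  obtain ⟨B', hB'⟩ := exists_right_inverse_fin hFrob A' hA'
  refine ⟨B'.submatrix id e, ?_⟩
  have hAe : A = A'.submatrix e id := by
    ext i j; simp [A']
  rw [hAe]
  have := Matrix.submatrix_mul_equiv A' B' ⇑e (Equiv.refl (Fin l)) ⇑e
  rw [Equiv.coe_refl] at this
  rw [this, hB', Matrix.submatrix_one_equiv]

/-- annihilator ideal of a vector -/
def annV {α : Type*} (v : α → R) : Ideal R where
  carrier := {r | r • v = 0}
  add_mem' := by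
    intro a b ha hb
    simp only [Set.mem_setOf_eq] at *
    rw [add_smul, ha, hb, add_zero]
  zero_mem' := by simp
  smul_mem' := by
    intro c x hx
    simp only [Set.mem_setOf_eq, smul_eq_mul] at *
    rw [mul_smul, hx, smul_zero]

lemma mem_annV {α : Type*} {v : α → R} {r : R} : r ∈ annV v ↔ r • v = 0 := Iff.rfl

def AnnSet (I : Ideal R) : Set R := {r | ∀ s ∈ I, s * r = 0}

lemma smul_vecMul' {m n : Type*} [Fintype m] (c : R) (v : m → R) (M : Matrix m n R) :
    (c • v) ᵥ* M = c • (v ᵥ* M) := by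
  ext j
  simp [Matrix.vecMul, dotProduct, Finset.mul_sum, mul_assoc]

/-- vectors killed by I correspond to tuples in AnnSet I -/
def annCondEquiv {α : Type*} (I : Ideal R) :
    {v : α → R // I ≤ annV v} ≃ (α → AnnSet I) where
  toFun v := fun j => ⟨v.1 j, by
    intro s hs
    have := congrFun (mem_annV.mp (v.2 hs)) j
    simpa using this⟩
  invFun f := ⟨fun j => (f j).1, by
    intro s hs
    rw [mem_annV]
    funext j
    simpa using (f j).2 s hs⟩
  left_inv v := rfl
  right_inv f := rfl

lemma card_annCond_pi {α : Type*} [Fintype α] (I : Ideal R) [Fintype R] :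
    Nat.card {v : α → R // I ≤ annV v} = Nat.card (AnnSet I) ^ (Fintype.card α) := by
  rw [Nat.card_congr (annCondEquiv I), Nat.card_pi]
  simp

variable {ι : Type*} [Fintype ι] {l : ℕ}

/-- the splitting of R^l along a right-invertible matrix, respecting annihilator conditions -/
def splitEquiv (A : Matrix ι (Fin l) R) (B0 : Matrix (Fin l) ι R)
    [DecidableEq ι] (hAB : A * B0 = 1) (I : Ideal R) :
    {v : Fin l → R // I ≤ annV v} ≃
      ({b : ι → R // I ≤ annV b} ×
        {s : {v : Fin l → R // v ᵥ* B0 = 0} // I ≤ annV s.1}) where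
  toFun v :=
    (⟨v.1 ᵥ* B0, by
      intro s hs
      rw [mem_annV, ← smul_vecMul', mem_annV.mp (v.2 hs), Matrix.zero_vecMul]⟩,
     ⟨⟨v.1 - (v.1 ᵥ* B0) ᵥ* A, by
        rw [Matrix.sub_vecMul, Matrix.vecMul_vecMul, hAB, Matrix.vecMul_one, sub_self]⟩, by
      intro s hs
      have hv := mem_annV.mp (v.2 hs)
      rw [mem_annV, smul_sub, hv, ← smul_vecMul', ← smul_vecMul', hv,
        Matrix.zero_vecMul, Matrix.zero_vecMul, sub_self]⟩)
  invFun p := ⟨(p.1.1 ᵥ* A) + p.2.1.1, by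
    intro s hs
    rw [mem_annV, smul_add, ← smul_vecMul', mem_annV.mp (p.1.2 hs),
      mem_annV.mp (p.2.2 hs), Matrix.zero_vecMul, add_zero]⟩
  left_inv v := by
    apply Subtype.ext
    simp only
    abel
  right_inv p := by
    have hb : ((p.1.1 ᵥ* A) + p.2.1.1) ᵥ* B0 = p.1.1 := by
      rw [Matrix.add_vecMul, Matrix.vecMul_vecMul, hAB, Matrix.vecMul_one, p.2.1.2, add_zero]
    refine Prod.ext (Subtype.ext ?_) (Subtype.ext (Subtype.ext ?_))
    · exact hb
    · simp only [hb]
      abel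

lemma exists_free_in_ker [Fintype R] [DecidableEq ι]
    (A : Matrix ι (Fin l) R) (B0 : Matrix (Fin l) ι R)
    (hAB : A * B0 = 1) (hlt : Fintype.card ι < l) :
    ∃ w : Fin l → R, w ᵥ* B0 = 0 ∧ ∀ c : R, c • w = 0 → c = 0 := by
  classical
  set m := Fintype.card ι with hm
  set k' := l - m with hk'
  have hmk : m + k' = l := by omega
  haveI : Finite (Ideal R) := Finite.of_injective (fun I => (I : Set R)) SetLike.coe_injective
  set S := {v : Fin l → R // v ᵥ* B0 = 0} with hS
  have key : ∀ I : Ideal R,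
      Nat.card {s : S // I ≤ annV s.1} = Nat.card {x : Fin k' → R // I ≤ annV x} := by
    intro I
    have hpos : 0 < Nat.card (AnnSet I) := by
      haveI : Nonempty (AnnSet I) := ⟨⟨0, fun s _ => mul_zero s⟩⟩
      exact Nat.card_pos
    have h1 : Nat.card {v : Fin l → R // I ≤ annV v}
        = Nat.card (AnnSet I) ^ l := by
      rw [card_annCond_pi]; simp
    have h2 : Nat.card {v : Fin l → R // I ≤ annV v}
        = Nat.card (AnnSet I) ^ m * Nat.card {s : S // I ≤ annV s.1} := by
      rw [Nat.card_congr (splitEquiv A B0 hAB I), Nat.card_prod, card_annCond_pi]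
    have h3 : Nat.card {x : Fin k' → R // I ≤ annV x} = Nat.card (AnnSet I) ^ k' := by
      rw [card_annCond_pi]; simp
    rw [h3]
    have : Nat.card (AnnSet I) ^ m * Nat.card {s : S // I ≤ annV s.1}
        = Nat.card (AnnSet I) ^ m * Nat.card (AnnSet I) ^ k' := by
      rw [← h2, h1, ← pow_add, hmk]
    exact Nat.eq_of_mul_eq_mul_left (by positivity) this
  have hmob := mobius_count (fun s : S => annV s.1) (fun x : Fin k' → R => annV x) key ⊥
  have hk'pos : 0 < k' := by omega
  have hmodel : Nat.card {x : Fin k' → R // annV x = ⊥} ≠ 0 := by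
    haveI : Nonempty {x : Fin k' → R // annV x = ⊥} := by
      refine ⟨⟨Pi.single ⟨0, hk'pos⟩ 1, ?_⟩⟩
      rw [eq_bot_iff]
      intro r hr
      have := congrFun (mem_annV.mp hr) ⟨0, hk'pos⟩
      simpa using this
    exact Nat.card_ne_zero.mpr ⟨inferInstance, inferInstance⟩
  rw [← hmob] at hmodel
  have : Nonempty {s : S // annV s.1 = ⊥} := (Nat.card_ne_zero.mp hmodel).1
  obtain ⟨⟨⟨w, hw1⟩, hw2⟩⟩ := this
  refine ⟨w, hw1, fun c hc => ?_⟩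
  have : c ∈ annV w := mem_annV.mpr hc
  rw [hw2] at this
  simpa using this


def stepEquiv (ι : Type) (k : ℕ) : ι ⊕ Fin (k + 1) ≃ Option ι ⊕ Fin k where
  toFun := Sum.elim (fun i => Sum.inl (some i))
    (fun j => Fin.cases (Sum.inl none) (fun j' => Sum.inr j') j)
  invFun := Sum.elim (fun o => o.elim (Sum.inr 0) (fun i => Sum.inl i))
    (fun j' => Sum.inr j'.succ)
  left_inv := by
    rintro (i | j)
    · rfl
    · induction j using Fin.cases with
      | zero => simp
      | succ j' => simp
  right_inv := by
    rintro ((_ | i) | j') <;> simp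

lemma transport_inv {ι κ n' : Type*} [Fintype ι] [Fintype κ] [Fintype n']
    [DecidableEq ι] [DecidableEq κ] [DecidableEq n']
    (M : Matrix κ n' R) (B : Matrix n' κ R) (e : ι ≃ κ)
    (h1 : M * B = 1) (h2 : B * M = 1) :
    (M.submatrix e id) * (B.submatrix id e) = 1 ∧
      (B.submatrix id e) * (M.submatrix e id) = 1 := by
  constructor
  · have h := Matrix.submatrix_mul_equiv M B ⇑e (Equiv.refl n') ⇑e
    rw [Equiv.coe_refl] at h
    rw [h, h1, Matrix.submatrix_one_equiv]
  · have h := Matrix.submatrix_mul_equiv B M (id : n' → n') e (id : n' → n')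
    rw [h, h2, Matrix.submatrix_id_id]

end FrobeniusAux2

lemma main_aux [CommRing R] [Fintype R] (hFrob : IsFrobenius R) {l : ℕ} :
    ∀ (k : ℕ) (ι : Type) [Fintype ι] [DecidableEq ι] (A : Matrix ι (Fin l) R),
      (∀ b : ι → R, Matrix.vecMul b A = 0 → b = 0) → Fintype.card ι + k = l →
      ∃ (A' : Matrix (Fin k) (Fin l) R) (B : Matrix (Fin l) (ι ⊕ Fin k) R),
        Matrix.fromRows A A' * B = 1 ∧ B * Matrix.fromRows A A' = 1 := by
  intro k
  induction k with
  | zero =>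
    intro ι _ _ A hA hcard
    obtain ⟨B0, hB0⟩ := exists_right_inverse hFrob A hA
    rw [Nat.add_zero] at hcard
    set e : ι ≃ Fin l := Fintype.equivFinOfCardEq hcard with he
    set Ah : Matrix (Fin l) (Fin l) R := A.submatrix e.symm id with hAh
    set Bh : Matrix (Fin l) (Fin l) R := B0.submatrix id e.symm with hBh
    have h1 : Ah * Bh = 1 := by
      have h := Matrix.submatrix_mul_equiv A B0 ⇑e.symm (Equiv.refl (Fin l)) ⇑e.symm
      rw [Equiv.coe_refl] at h
      rw [hAh, hBh, h, hB0, Matrix.submatrix_one_equiv]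
    have h2 : Bh * Ah = 1 := mul_eq_one_comm.mp h1
    set e' : ι ⊕ Fin 0 ≃ Fin l := (Equiv.sumEmpty ι (Fin 0)).trans e with he'
    have hM : Matrix.fromRows A (0 : Matrix (Fin 0) (Fin l) R) = Ah.submatrix e' id := by
      ext x j
      rcases x with i | j0
      · simp [hAh, he', Matrix.fromRows_apply_inl]
      · exact j0.elim0
    obtain ⟨hh1, hh2⟩ := transport_inv Ah Bh e' h1 h2
    exact ⟨0, Bh.submatrix id e', by rw [hM]; exact hh1, by rw [hM]; exact hh2⟩
  | succ k IH =>
    intro ι _ _ A hA hcard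
    obtain ⟨B0, hB0⟩ := exists_right_inverse hFrob A hA
    have hlt : Fintype.card ι < l := by omega
    obtain ⟨w, hw1, hw2⟩ := exists_free_in_ker A B0 hB0 hlt
    set Ap : Matrix (Option ι) (Fin l) R :=
      Matrix.of (fun o j => o.elim (w j) (fun i => A i j)) with hApdef
    have hAp : ∀ b : Option ι → R, Matrix.vecMul b Ap = 0 → b = 0 := by
      intro b hb
      have hsum : Matrix.vecMul b Ap
          = b none • w + Matrix.vecMul (fun i => b (some i)) A := by
        funext j
        simp only [Matrix.vecMul, dotProduct, Pi.add_apply, Pi.smul_apply, smul_eq_mul]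
        rw [Fintype.sum_option]
        rfl
      rw [hsum] at hb
      have hb2 : Matrix.vecMul (b none • w + Matrix.vecMul (fun i => b (some i)) A) B0 = 0 := by
        rw [hb, Matrix.zero_vecMul]
      rw [Matrix.add_vecMul, smul_vecMul', hw1, smul_zero, zero_add,
        Matrix.vecMul_vecMul, hB0, Matrix.vecMul_one] at hb2
      have hz : Matrix.vecMul (fun i => b (some i)) A = 0 := by
        rw [hb2, Matrix.zero_vecMul]
      rw [hz, add_zero] at hb
      have hn : b none = 0 := hw2 _ hb
      funext o
      cases o with
      | none => exact hn
      | some i => exact congrFun hb2 i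
    have hcard' : Fintype.card (Option ι) + k = l := by
      rw [Fintype.card_option]; omega
    obtain ⟨A'', B', h1, h2⟩ := IH (Option ι) Ap hAp hcard'
    set e := stepEquiv ι k with hedef
    set A' : Matrix (Fin (k + 1)) (Fin l) R :=
      Matrix.of (Fin.cons w (fun j' => A'' j')) with hA'def
    have hM : Matrix.fromRows A A' = (Matrix.fromRows Ap A'').submatrix e id := by
      ext x j
      rcases x with i | jj
      · simp [hedef, stepEquiv, hApdef, Matrix.fromRows_apply_inl]
      · induction jj using Fin.cases with
        | zero => simp [hedef, stepEquiv, hA'def, hApdef, Matrix.fromRows_apply_inl, Matrix.fromRows_apply_inr]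
        | succ j' => simp [hedef, stepEquiv, hA'def, Matrix.fromRows_apply_inr]
    obtain ⟨hh1, hh2⟩ := transport_inv (Matrix.fromRows Ap A'') B' e h1 h2
    exact ⟨A', B'.submatrix id e, by rw [hM]; exact hh1, by rw [hM]; exact hh2⟩

theorem stmt7 [CommRing R] [Fintype R] (hFrob : IsFrobenius R) {m k l : ℕ}
    (hkl : m + k = l)
    (A : Matrix (Fin m) (Fin l) R) (hA : FRR A) :
    ∃ (A' : Matrix (Fin k) (Fin l) R) (B : Matrix (Fin l) (Fin m ⊕ Fin k) R),
      Matrix.fromRows A A' * B = 1 ∧ B * Matrix.fromRows A A' = 1 := by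
  have hcard : Fintype.card (Fin m) + k = l := by
    rw [Fintype.card_fin]; exact hkl
  exact main_aux hFrob k (Fin m) A hA hcard
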